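/- The Morley form satisfies (X_i − Y_i)·morl(f1,f2) = 0 in [B ⊗_A B]_{δ+1} for i = 1,2, and this implies that for all p + q = δ and all b ∈ B_q, one has (b ⊗ 1)·morl_{p,q}(f1,f2) = sylv_{(0,0)}(f1,f2) ⊗ b, and for all b ∈ B_p, (1 ⊗ b)·morl_{p,q}(f1,f2) = b ⊗ sylv_{(0,0)}(f1,f2). -/

import Mathlib

/-! Cramer's rule for the Morley matrix `h` gives `(X_i - Y_i) · det h ∈ J`; since `b(X) - b(Y)`
lies in the ideal of the diagonal, `(b(X) - b(Y)) · det h ∈ J` for every `b`. The ideal `J` is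
homogeneous for the `X`-degree, so comparing components of `X`-degree `δ` (resp. `p`) yields the
dualities once the extreme components of `det h` are known modulo `J`. Setting `X = 0` turns `h`
into a matrix expressing `f_i(Y)` through `Y_1, Y_2`, whose determinant is `sylv(Y)` modulo
`(f_1(Y), f_2(Y))` because `(Y_1, Y_2)` has only Koszul syzygies. For the top component, replace
`h` by its homogeneous components, which changes `det h` only modulo `J` since
`(X_1 - Y_1, X_2 - Y_2)` also has only Koszul syzygies; the part of `X`-degree `δ` of the new
determinant is its part of `Y`-degree `0`, and the symmetric argument gives `sylv(X)`. -/

open MvPolynomial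

section KoszulPair

variable {R S : Type*} [CommRing R] [CommRing S]

/-- The syzygies of `(x, y)` are the multiples of the Koszul syzygy `(y, x)`. -/
def IsKoszulPair (x y : R) : Prop :=
  ∀ u v : R, x * u = y * v → ∃ w, u = y * w ∧ v = x * w

theorem IsKoszulPair.map {x y : R} (h : IsKoszulPair x y) (e : R ≃+* S) :
    IsKoszulPair (e x) (e y) := by
  intro u v huv
  obtain ⟨w, hu, hv⟩ := h (e.symm u) (e.symm v) (e.injective (by simpa using huv))
  exact ⟨e w, by simpa using congrArg e hu, by simpa using congrArg e hv⟩

theorem mul_det_mem_span_pair {x y f g u₁ v₁ u₂ v₂ z : R}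
    (hf : f = x * u₁ + y * v₁) (hg : g = x * u₂ + y * v₂) (hz : z ∈ Ideal.span {x, y}) :
    z * (u₁ * v₂ - v₁ * u₂) ∈ Ideal.span {f, g} := by
  obtain ⟨a, b, rfl⟩ := Ideal.mem_span_pair.mp hz
  exact Ideal.mem_span_pair.mpr ⟨a * v₂ - b * u₂, b * u₁ - a * v₁, by rw [hf, hg]; ring⟩

theorem IsKoszulPair.det_sub_det_mem_span_pair {x y f g u₁ v₁ u₂ v₂ u₁' v₁' u₂' v₂' : R}
    (hxy : IsKoszulPair x y)
    (hf : f = x * u₁ + y * v₁) (hf' : f = x * u₁' + y * v₁')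
    (hg : g = x * u₂ + y * v₂) (hg' : g = x * u₂' + y * v₂') :
    (u₁ * v₂ - v₁ * u₂) - (u₁' * v₂' - v₁' * u₂') ∈ Ideal.span {f, g} := by
  obtain ⟨w₁, hu₁, hv₁⟩ := hxy (u₁ - u₁') (v₁' - v₁) (by linear_combination hf' - hf)
  obtain ⟨w₂, hu₂, hv₂⟩ := hxy (u₂ - u₂') (v₂' - v₂) (by linear_combination hg' - hg)
  refine Ideal.mem_span_pair.mpr ⟨-w₂, w₁, ?_⟩
  rw [show u₁' = u₁ - y * w₁ by linear_combination -hu₁,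
    show u₂' = u₂ - y * w₂ by linear_combination -hu₂,
    show v₁' = v₁ + x * w₁ by linear_combination hv₁,
    show v₂' = v₂ + x * w₂ by linear_combination hv₂]
  linear_combination (-w₂) * hf + w₁ * hg

end KoszulPair

theorem RingTheory.Sequence.IsRegular.ne_zero_of_pair {R M : Type*} [CommRing R]
    [AddCommGroup M] [Module R M] {r s : R} (h : IsRegular M [r, s]) : r ≠ 0 ∧ s ≠ 0 := by
  have hM := h.nontrivial
  obtain ⟨hr, hs⟩ := (isRegular_cons_iff M r [s]).mp h
  have hQ := hs.nontrivial
  obtain ⟨hs, -⟩ := (isRegular_cons_iff _ s []).mp hs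
  exact ⟨by rintro rfl; exact hr.not_zero, by rintro rfl; exact hs.not_zero⟩

namespace MvPolynomial

variable {R σ τ : Type*} [CommRing R]

theorem isKoszulPair_X {i j : σ} (hij : i ≠ j) :
    IsKoszulPair (X i : MvPolynomial σ R) (X j) := by
  classical
  intro u v huv
  have hv : v.modMonomial (Finsupp.single i 1) = 0 := by
    ext m
    by_cases hm : Finsupp.single i 1 ≤ m
    · rw [coeff_modMonomial_of_le _ hm, coeff_zero]
    · have hmi : (m + Finsupp.single j 1 : σ →₀ ℕ) i = 0 := by
        simpa [Finsupp.single_apply, hij.symm, Finsupp.single_le_iff] using hm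
      rw [coeff_modMonomial_of_not_le _ hm, coeff_zero, ← coeff_X_mul m j, ← huv, coeff_X_mul',
        if_neg (by simpa [and_comm] using hmi)]
  obtain ⟨w, rfl⟩ := X_dvd_iff_modMonomial_eq_zero.mpr hv
  exact ⟨w, (isRegular_X (n := i)).left (by simp only; rw [huv]; ring), rfl⟩

theorem isKoszulPair_X_sub_X :
    IsKoszulPair (X 0 - X 2 : MvPolynomial (Fin 4) R) (X 1 - X 3) := by
  let e : MvPolynomial (Fin 4) R ≃ₐ[R] MvPolynomial (Fin 4) R :=
    AlgEquiv.ofAlgHom (aeval ![X 0 - X 2, X 1 - X 3, X 2, X 3])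
      (aeval ![X 0 + X 2, X 1 + X 3, X 2, X 3])
      (by ext i; fin_cases i <;> simp) (by ext i; fin_cases i <;> simp)
  simpa [e] using (isKoszulPair_X (R := R) (by decide : (0 : Fin 4) ≠ 1)).map e.toRingEquiv

theorem rename_sub_rename_mem_span (f g : σ → τ) (p : MvPolynomial σ R) :
    rename f p - rename g p ∈ Ideal.span (Set.range fun i ↦ X (f i) - X (g i)) := by
  rw [← Ideal.Quotient.eq]
  change (Ideal.Quotient.mkₐ R _).comp (rename f) p = (Ideal.Quotient.mkₐ R _).comp (rename g) p
  congr 1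
  ext i
  exact Ideal.Quotient.eq.mpr (Ideal.subset_span ⟨i, by simp⟩)

theorem IsHomogeneous.eq_add_one_of_eq_X_mul_add_X_mul {f a b : MvPolynomial σ R} {d e : ℕ}
    (hf : f.IsHomogeneous d) (hf0 : f ≠ 0) (ha : a.IsHomogeneous e) (hb : b.IsHomogeneous e)
    {i j : σ} (h : f = X i * a + X j * b) : d = e + 1 := by
  refine hf.inj_right ?_ hf0
  rw [h, add_comm e]
  exact ((isHomogeneous_X R i).mul ha).add ((isHomogeneous_X R j).mul hb)

section Weighted

attribute [local instance] weightedGradedAlgebra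

theorem IsWeightedHomogeneous.rename {M : Type*} [AddCommMonoid M] {w : τ → M} {f : σ → τ}
    {p : MvPolynomial σ R} {n : M} (hp : IsWeightedHomogeneous (w ∘ f) p n) :
    IsWeightedHomogeneous w (rename f p) n := by
  classical
  intro d hd
  obtain ⟨u, rfl, hu⟩ := coeff_rename_ne_zero _ _ _ hd
  rw [← hp hu]
  simp only [Finsupp.weight, LinearMap.toAddMonoidHom_coe]
  exact Finsupp.linearCombination_mapDomain (R := ℕ) (v' := w) f u

theorem isWeightedHomogeneous_rename_of_comp_eq_one {w : τ → ℕ} {f : σ → τ} (hwf : w ∘ f = 1)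
    {p : MvPolynomial σ R} {n : ℕ} (hp : p.IsHomogeneous n) :
    IsWeightedHomogeneous w (rename f p) n :=
  IsWeightedHomogeneous.rename (hwf ▸ hp)

theorem isWeightedHomogeneous_rename_of_comp_eq_zero {w : τ → ℕ} {f : σ → τ} (hwf : w ∘ f = 0)
    (p : MvPolynomial σ R) : IsWeightedHomogeneous w (rename f p) 0 :=
  IsWeightedHomogeneous.rename fun d _ ↦ by simp [hwf, Finsupp.weight_apply]

theorem IsWeightedHomogeneous.weightedHomogeneousComponent_mul_of_left {M : Type*}
    [AddCancelCommMonoid M] {w : σ → M} {a : MvPolynomial σ R} {m : M}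
    (ha : IsWeightedHomogeneous w a m) (b : MvPolynomial σ R) (n : M) :
    weightedHomogeneousComponent w (m + n) (a * b) = a * weightedHomogeneousComponent w n b := by
  classical
  simp_rw [← weightedDecomposition.decompose'_apply]
  exact DirectSum.coe_decompose_mul_add_of_left_mem _ ha

theorem IsHomogeneous.eq_mul_add_mul_homogeneousComponent {g x y u v : MvPolynomial σ R} {k : ℕ}
    (hg : g.IsHomogeneous (k + 1)) (hx : x.IsHomogeneous 1) (hy : y.IsHomogeneous 1)
    (h : g = x * u + y * v) :
    g = x * homogeneousComponent k u + y * homogeneousComponent k v := by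
  rw [← IsWeightedHomogeneous.weightedHomogeneousComponent_same hg, add_comm k, h, map_add]
  exact congr_arg₂ (· + ·) (hx.weightedHomogeneousComponent_mul_of_left u k)
    (hy.weightedHomogeneousComponent_mul_of_left v k)

variable (R) in
noncomputable def weightZeroPart (w : σ → ℕ) : MvPolynomial σ R →+* MvPolynomial σ R :=
  GradedRing.projZeroRingHom (weightedHomogeneousSubmodule R w)

theorem weightZeroPart_apply (w : σ → ℕ) (p : MvPolynomial σ R) :
    weightZeroPart R w p = weightedHomogeneousComponent w 0 p :=
  weightedDecomposition.decompose'_apply R w p 0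

theorem weightZeroPart_of_isWeightedHomogeneous {w : σ → ℕ} {p : MvPolynomial σ R} {n : ℕ}
    (hp : IsWeightedHomogeneous w p n) : weightZeroPart R w p = if n = 0 then p else 0 := by
  classical
  rw [weightZeroPart_apply, weightedHomogeneousComponent_of_mem hp]
  simp [eq_comm]

theorem weightedHomogeneousComponent_eq_weightZeroPart {w w' : σ → ℕ} (hw : w + w' = 1)
    {p : MvPolynomial σ R} {n : ℕ} (hp : p.IsHomogeneous n) :
    weightedHomogeneousComponent w n p = weightZeroPart R w' p := by
  classical
  rw [weightZeroPart_apply, weightedHomogeneousComponent_apply,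
    weightedHomogeneousComponent_apply]
  refine Finset.sum_congr (Finset.filter_congr fun d hd ↦ ?_) fun _ _ ↦ rfl
  have hsum : Finsupp.weight w d + Finsupp.weight w' d = n := by
    simp only [← hp (mem_support_iff.mp hd), ← hw, Finsupp.weight_apply, Pi.add_apply, smul_add,
      Finsupp.sum_add]
  omega

end Weighted

section Morley

attribute [local instance] weightedGradedAlgebra

variable {A : Type*} [CommRing A] {f₁ f₂ : MvPolynomial (Fin 2) A}
  {h₁₁ h₁₂ h₂₁ h₂₂ : MvPolynomial (Fin 4) A} {a₁₁ a₁₂ a₂₁ a₂₂ : MvPolynomial (Fin 2) A}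

local notation "wX" => (![1, 1, 0, 0] : Fin 4 → ℕ)
local notation "wY" => (![0, 0, 1, 1] : Fin 4 → ℕ)

/-- The quotient by this ideal is `B ⊗_A B`, the variables `X 0, X 1` acting on the left factor
and `X 2, X 3` on the right one. -/
noncomputable abbrev tensorSquareIdeal (f₁ f₂ : MvPolynomial (Fin 2) A) :
    Ideal (MvPolynomial (Fin 4) A) :=
  Ideal.span {rename ![0, 1] f₁, rename ![0, 1] f₂, rename ![2, 3] f₁, rename ![2, 3] f₂}

theorem span_sub_le_tensorSquareIdeal :
    Ideal.span {rename ![0, 1] f₁ - rename ![2, 3] f₁, rename ![0, 1] f₂ - rename ![2, 3] f₂} ≤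
      tensorSquareIdeal f₁ f₂ := by
  simp only [Ideal.span_le, Set.insert_subset_iff, Set.singleton_subset_iff, SetLike.mem_coe]
  exact ⟨sub_mem (Ideal.subset_span (by simp)) (Ideal.subset_span (by simp)),
    sub_mem (Ideal.subset_span (by simp)) (Ideal.subset_span (by simp))⟩

theorem tensorSquareIdeal_isHomogeneous {d₁ d₂ : ℕ} (hf₁ : f₁.IsHomogeneous d₁)
    (hf₂ : f₂.IsHomogeneous d₂) :
    (tensorSquareIdeal f₁ f₂).IsHomogeneous (weightedHomogeneousSubmodule A wX) := by
  apply Ideal.homogeneous_span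
  simp only [Set.mem_insert_iff, Set.mem_singleton_iff]
  rintro _ (rfl | rfl | rfl | rfl)
  exacts [⟨d₁, isWeightedHomogeneous_rename_of_comp_eq_one (by decide) hf₁⟩,
    ⟨d₂, isWeightedHomogeneous_rename_of_comp_eq_one (by decide) hf₂⟩,
    ⟨0, isWeightedHomogeneous_rename_of_comp_eq_zero (by decide) f₁⟩,
    ⟨0, isWeightedHomogeneous_rename_of_comp_eq_zero (by decide) f₂⟩]

theorem rename_right_eq_of_sub_eq {f : MvPolynomial (Fin 2) A} {d : ℕ} (hf : f.IsHomogeneous d)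
    (hd : d ≠ 0) {h₁ h₂ : MvPolynomial (Fin 4) A}
    (hh : rename ![0, 1] f - rename ![2, 3] f = (X 0 - X 2) * h₁ + (X 1 - X 3) * h₂) :
    rename ![2, 3] f = X 2 * weightZeroPart A wX h₁ + X 3 * weightZeroPart A wX h₂ := by
  have := congrArg (weightZeroPart A wX) hh
  simp only [map_sub, map_add, map_mul,
    weightZeroPart_of_isWeightedHomogeneous (isWeightedHomogeneous_X A wX _),
    weightZeroPart_of_isWeightedHomogeneous
      (isWeightedHomogeneous_rename_of_comp_eq_one (w := wX) (f := ![0, 1]) (by decide) hf),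
    weightZeroPart_of_isWeightedHomogeneous
      (isWeightedHomogeneous_rename_of_comp_eq_zero (w := wX) (f := ![2, 3]) (by decide) f)]
    at this
  simp [hd] at this
  linear_combination -this

theorem rename_left_eq_of_sub_eq {f : MvPolynomial (Fin 2) A} {d : ℕ} (hf : f.IsHomogeneous d)
    (hd : d ≠ 0) {h₁ h₂ : MvPolynomial (Fin 4) A}
    (hh : rename ![0, 1] f - rename ![2, 3] f = (X 0 - X 2) * h₁ + (X 1 - X 3) * h₂) :
    rename ![0, 1] f = X 0 * weightZeroPart A wY h₁ + X 1 * weightZeroPart A wY h₂ := by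
  have := congrArg (weightZeroPart A wY) hh
  simp only [map_sub, map_add, map_mul,
    weightZeroPart_of_isWeightedHomogeneous (isWeightedHomogeneous_X A wY _),
    weightZeroPart_of_isWeightedHomogeneous
      (isWeightedHomogeneous_rename_of_comp_eq_one (w := wY) (f := ![2, 3]) (by decide) hf),
    weightZeroPart_of_isWeightedHomogeneous
      (isWeightedHomogeneous_rename_of_comp_eq_zero (w := wY) (f := ![0, 1]) (by decide) f)]
    at this
  simp [hd] at this
  linear_combination this

theorem weightZeroPart_det_sub_rename_right_mem {d₁ d₂ : ℕ} (hf₁ : f₁.IsHomogeneous d₁)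
    (hd₁ : d₁ ≠ 0) (hf₂ : f₂.IsHomogeneous d₂) (hd₂ : d₂ ≠ 0)
    (hh₁ : rename ![0, 1] f₁ - rename ![2, 3] f₁ = (X 0 - X 2) * h₁₁ + (X 1 - X 3) * h₁₂)
    (hh₂ : rename ![0, 1] f₂ - rename ![2, 3] f₂ = (X 0 - X 2) * h₂₁ + (X 1 - X 3) * h₂₂)
    (ha₁ : f₁ = X 0 * a₁₁ + X 1 * a₁₂) (ha₂ : f₂ = X 0 * a₂₁ + X 1 * a₂₂) :
    weightZeroPart A wX (h₁₁ * h₂₂ - h₁₂ * h₂₁) - rename ![2, 3] (a₁₁ * a₂₂ - a₁₂ * a₂₁) ∈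
      tensorSquareIdeal f₁ f₂ := by
  have hY : ∀ {f a b : MvPolynomial (Fin 2) A}, f = X 0 * a + X 1 * b →
      rename (![2, 3] : Fin 2 → Fin 4) f = X 2 * rename ![2, 3] a + X 3 * rename ![2, 3] b := by
    rintro _ _ _ rfl; simp
  have := (isKoszulPair_X (R := A) (by decide : (2 : Fin 4) ≠ 3)).det_sub_det_mem_span_pair
    (rename_right_eq_of_sub_eq hf₁ hd₁ hh₁) (hY ha₁) (rename_right_eq_of_sub_eq hf₂ hd₂ hh₂)
    (hY ha₂)
  simp only [map_sub, map_mul]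
  exact Ideal.span_mono (by simp [Set.insert_subset_iff]) this

theorem weightZeroPart_det_sub_rename_left_mem {d₁ d₂ : ℕ} (hf₁ : f₁.IsHomogeneous d₁)
    (hd₁ : d₁ ≠ 0) (hf₂ : f₂.IsHomogeneous d₂) (hd₂ : d₂ ≠ 0)
    (hh₁ : rename ![0, 1] f₁ - rename ![2, 3] f₁ = (X 0 - X 2) * h₁₁ + (X 1 - X 3) * h₁₂)
    (hh₂ : rename ![0, 1] f₂ - rename ![2, 3] f₂ = (X 0 - X 2) * h₂₁ + (X 1 - X 3) * h₂₂)
    (ha₁ : f₁ = X 0 * a₁₁ + X 1 * a₁₂) (ha₂ : f₂ = X 0 * a₂₁ + X 1 * a₂₂) :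
    weightZeroPart A wY (h₁₁ * h₂₂ - h₁₂ * h₂₁) - rename ![0, 1] (a₁₁ * a₂₂ - a₁₂ * a₂₁) ∈
      tensorSquareIdeal f₁ f₂ := by
  have hX : ∀ {f a b : MvPolynomial (Fin 2) A}, f = X 0 * a + X 1 * b →
      rename (![0, 1] : Fin 2 → Fin 4) f = X 0 * rename ![0, 1] a + X 1 * rename ![0, 1] b := by
    rintro _ _ _ rfl; simp
  have := (isKoszulPair_X (R := A) (by decide : (0 : Fin 4) ≠ 1)).det_sub_det_mem_span_pair
    (rename_left_eq_of_sub_eq hf₁ hd₁ hh₁) (hX ha₁) (rename_left_eq_of_sub_eq hf₂ hd₂ hh₂)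
    (hX ha₂)
  simp only [map_sub, map_mul]
  exact Ideal.span_mono (by simp [Set.insert_subset_iff]) this

theorem rename_sub_rename_eq_homogeneousComponent {f : MvPolynomial (Fin 2) A} {e : ℕ}
    (hf : f.IsHomogeneous (e + 1)) {h₁ h₂ : MvPolynomial (Fin 4) A}
    (hh : rename ![0, 1] f - rename ![2, 3] f = (X 0 - X 2) * h₁ + (X 1 - X 3) * h₂) :
    rename ![0, 1] f - rename ![2, 3] f =
      (X 0 - X 2) * homogeneousComponent e h₁ + (X 1 - X 3) * homogeneousComponent e h₂ :=
  (hf.rename_isHomogeneous.sub hf.rename_isHomogeneous).eq_mul_add_mul_homogeneousComponent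
    ((isHomogeneous_X A 0).sub (isHomogeneous_X A 2))
    ((isHomogeneous_X A 1).sub (isHomogeneous_X A 3)) hh

theorem weightedHomogeneousComponent_det_sub_rename_mem {e₁ e₂ : ℕ}
    (hf₁ : f₁.IsHomogeneous (e₁ + 1)) (hf₂ : f₂.IsHomogeneous (e₂ + 1))
    (hh₁ : rename ![0, 1] f₁ - rename ![2, 3] f₁ = (X 0 - X 2) * h₁₁ + (X 1 - X 3) * h₁₂)
    (hh₂ : rename ![0, 1] f₂ - rename ![2, 3] f₂ = (X 0 - X 2) * h₂₁ + (X 1 - X 3) * h₂₂)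
    (ha₁ : f₁ = X 0 * a₁₁ + X 1 * a₁₂) (ha₂ : f₂ = X 0 * a₂₁ + X 1 * a₂₂) :
    weightedHomogeneousComponent wX (e₁ + e₂) (h₁₁ * h₂₂ - h₁₂ * h₂₁) -
      rename ![0, 1] (a₁₁ * a₂₂ - a₁₂ * a₂₁) ∈ tensorSquareIdeal f₁ f₂ := by
  have hH₁ := rename_sub_rename_eq_homogeneousComponent hf₁ hh₁
  have hH₂ := rename_sub_rename_eq_homogeneousComponent hf₂ hh₂
  have hΔ := span_sub_le_tensorSquareIdeal
    (isKoszulPair_X_sub_X.det_sub_det_mem_span_pair hh₁ hH₁ hh₂ hH₂)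
  have hΔH : (homogeneousComponent e₁ h₁₁ * homogeneousComponent e₂ h₂₂ -
      homogeneousComponent e₁ h₁₂ * homogeneousComponent e₂ h₂₁).IsHomogeneous (e₁ + e₂) :=
    ((homogeneousComponent_isHomogeneous _ _).mul (homogeneousComponent_isHomogeneous _ _)).sub
      ((homogeneousComponent_isHomogeneous _ _).mul (homogeneousComponent_isHomogeneous _ _))
  have hcomp := weightedHomogeneousComponent_mem_of_mem A wX (tensorSquareIdeal_isHomogeneous hf₁ hf₂)
    hΔ (e₁ + e₂)
  rw [map_sub, weightedHomogeneousComponent_eq_weightZeroPart (w' := wY) (by decide) hΔH]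
    at hcomp
  convert add_mem hcomp (weightZeroPart_det_sub_rename_left_mem hf₁ e₁.succ_ne_zero hf₂
    e₂.succ_ne_zero hH₁ hH₂ ha₁ ha₂) using 1
  ring

theorem rename_mul_weightedHomogeneousComponent_sub_mem {I : Ideal (MvPolynomial (Fin 4) A)}
    (hI : I.IsHomogeneous (weightedHomogeneousSubmodule A wX)) {Δ : MvPolynomial (Fin 4) A}
    (hΔ : ∀ z ∈ Ideal.span {X 0 - X 2, X 1 - X 3}, z * Δ ∈ I)
    {b : MvPolynomial (Fin 2) A} {q : ℕ} (hb : b.IsHomogeneous q) (k : ℕ) :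
    rename ![0, 1] b * weightedHomogeneousComponent wX k Δ -
      rename ![2, 3] b * weightedHomogeneousComponent wX (q + k) Δ ∈ I := by
  have hdiff : rename ![0, 1] b - rename ![2, 3] b ∈
      Ideal.span {(X 0 - X 2 : MvPolynomial (Fin 4) A), X 1 - X 3} := by
    refine Ideal.span_mono ?_ (rename_sub_rename_mem_span _ _ b)
    rintro _ ⟨i, rfl⟩
    fin_cases i <;> simp
  have hY := (isWeightedHomogeneous_rename_of_comp_eq_zero (w := wX) (f := ![2, 3]) (by decide)
    b).weightedHomogeneousComponent_mul_of_left Δ (q + k)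
  rw [zero_add] at hY
  have := weightedHomogeneousComponent_mem_of_mem A wX hI (hΔ _ hdiff) (q + k)
  rwa [sub_mul, map_sub, hY, (isWeightedHomogeneous_rename_of_comp_eq_one (w := wX)
    (f := ![0, 1]) (by decide) hb).weightedHomogeneousComponent_mul_of_left] at this

end Morley

end MvPolynomial

/-- The Morley form satisfies `(X_i − Y_i) · morl(f1,f2) = 0` in
`[B ⊗_A B]_{δ+1}` for `i = 1,2`, and consequently, for all `p + q = δ` and all `b ∈ B_q`,
`(b ⊗ 1) · morl_{p,q}(f1,f2) = sylv_{(0,0)}(f1,f2) ⊗ b`, and for all `b ∈ B_p`,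
`(1 ⊗ b) · morl_{p,q}(f1,f2) = b ⊗ sylv_{(0,0)}(f1,f2)`.  Everything is expressed via
representatives in `A[X,Y]` modulo `J = (f1(X),f2(X),f1(Y),f2(Y))`: `morl` is
`det (h_{i,j})` for a decomposition `f_i(X) − f_i(Y) = (X1−Y1)h_{i,1} + (X2−Y2)h_{i,2}`,
`morl_{p,q}` its weight-(1,1,0,0) homogeneous component of degree `p`, and
`sylv_{(0,0)}` is `det (a_{i,j})` for decompositions `f_i = X1 a_{i,1} + X2 a_{i,2}`. -/
theorem stmt6 {A : Type*} [CommRing A] [Nontrivial A] (d1 d2 : ℕ)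
    (f1 f2 : MvPolynomial (Fin 2) A)
    (hf1 : f1.IsHomogeneous d1) (hf2 : f2.IsHomogeneous d2)
    (hreg : RingTheory.Sequence.IsRegular (MvPolynomial (Fin 2) A) [f1, f2])
    (F1X F2X F1Y F2Y : MvPolynomial (Fin 4) A)
    (hF1X : F1X = rename ![0, 1] f1) (hF2X : F2X = rename ![0, 1] f2)
    (hF1Y : F1Y = rename ![2, 3] f1) (hF2Y : F2Y = rename ![2, 3] f2)
    (h11 h12 h21 h22 : MvPolynomial (Fin 4) A)
    (hh1 : F1X - F1Y = (X 0 - X 2) * h11 + (X 1 - X 3) * h12)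
    (hh2 : F2X - F2Y = (X 0 - X 2) * h21 + (X 1 - X 3) * h22)
    (a11 a12 a21 a22 : MvPolynomial (Fin 2) A)
    (ha11 : a11.IsHomogeneous (d1 - 1)) (ha12 : a12.IsHomogeneous (d1 - 1))
    (ha21 : a21.IsHomogeneous (d2 - 1)) (ha22 : a22.IsHomogeneous (d2 - 1))
    (hfa1 : f1 = X 0 * a11 + X 1 * a12)
    (hfa2 : f2 = X 0 * a21 + X 1 * a22) :
    ((X 0 - X 2) * (h11 * h22 - h12 * h21) ∈ Ideal.span {F1X, F2X, F1Y, F2Y}) ∧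
    ((X 1 - X 3) * (h11 * h22 - h12 * h21) ∈ Ideal.span {F1X, F2X, F1Y, F2Y}) ∧
    (∀ p q : ℕ, p + q = d1 + d2 - 2 →
      (∀ b : MvPolynomial (Fin 2) A, b.IsHomogeneous q →
        rename ![0, 1] b *
            weightedHomogeneousComponent ![1, 1, 0, 0] p (h11 * h22 - h12 * h21) -
          rename ![0, 1] (a11 * a22 - a12 * a21) * rename ![2, 3] b ∈
          Ideal.span {F1X, F2X, F1Y, F2Y}) ∧
      (∀ b : MvPolynomial (Fin 2) A, b.IsHomogeneous p →
        rename ![2, 3] b *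
            weightedHomogeneousComponent ![1, 1, 0, 0] p (h11 * h22 - h12 * h21) -
          rename ![0, 1] b * rename ![2, 3] (a11 * a22 - a12 * a21) ∈
          Ideal.span {F1X, F2X, F1Y, F2Y})) := by
  subst hF1X hF2X hF1Y hF2Y
  obtain ⟨hf1ne, hf2ne⟩ := hreg.ne_zero_of_pair
  obtain ⟨e1, rfl⟩ : ∃ e, d1 = e + 1 :=
    ⟨_, hf1.eq_add_one_of_eq_X_mul_add_X_mul hf1ne ha11 ha12 hfa1⟩
  obtain ⟨e2, rfl⟩ : ∃ e, d2 = e + 1 :=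
    ⟨_, hf2.eq_add_one_of_eq_X_mul_add_X_mul hf2ne ha21 ha22 hfa2⟩
  rw [show e1 + 1 + (e2 + 1) - 2 = e1 + e2 by omega]
  have hmorley : ∀ z ∈ Ideal.span {(X 0 - X 2 : MvPolynomial (Fin 4) A), X 1 - X 3},
      z * (h11 * h22 - h12 * h21) ∈ tensorSquareIdeal f1 f2 :=
    fun z hz ↦ span_sub_le_tensorSquareIdeal (mul_det_mem_span_pair hh1 hh2 hz)
  have hJ := tensorSquareIdeal_isHomogeneous hf1 hf2
  have htop := weightedHomogeneousComponent_det_sub_rename_mem hf1 hf2 hh1 hh2 hfa1 hfa2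
  have hbot := weightZeroPart_det_sub_rename_right_mem hf1 e1.succ_ne_zero hf2 e2.succ_ne_zero
    hh1 hh2 hfa1 hfa2
  rw [weightZeroPart_apply] at hbot
  refine ⟨hmorley _ (Ideal.subset_span (by simp)), hmorley _ (Ideal.subset_span (by simp)),
    fun p q hpq ↦ ⟨fun b hb ↦ ?_, fun b hb ↦ ?_⟩⟩
  · have hdual := rename_mul_weightedHomogeneousComponent_sub_mem hJ hmorley hb p
    rw [add_comm, hpq] at hdual
    convert add_mem hdual (Ideal.mul_mem_left _ (rename ![2, 3] b) htop) using 1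
    ring
  · have hdual := rename_mul_weightedHomogeneousComponent_sub_mem hJ hmorley hb 0
    rw [add_zero] at hdual
    convert sub_mem (Ideal.mul_mem_left _ (rename ![0, 1] b) hbot) hdual using 1
    ring
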